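/- (Theorem 3.2 (i)) Assume G is conserved by X. Let x : ℝ → E be a differentiable curve solving the geometrically dissipated system with x(0) = x₀, and suppose there are sequences (tₙ) and (sₙ) of reals tending to +∞ and points a, b ∈ E such that x(tₙ) → a and x(sₙ) → b. Then G(a) = G(b) ≤ G(x₀). Moreover, if G(a) = G(x₀), then x₀ ∈ Inv. -/

import Mathlib

open scoped RealInnerProductSpace BigOperators
open Filter Topology

/-- `Σ^{(a₁,…,a_r)}_{(b₁,…,b_s)}`: the `r × s` real matrix whose `(i,j)` entry is `⟪b j, a i⟫`. -/
noncomputable def sigmaMat {E : Type*} [NormedAddCommGroup E] [InnerProductSpace ℝ E]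
    {r s : ℕ} (a : Fin r → E) (b : Fin s → E) : Matrix (Fin r) (Fin s) ℝ :=
  Matrix.of fun i j => ⟪b j, a i⟫

/-- The standard control vector `v₀(w₁,…,w_{k+1},u)`: there are `k+1` vectors `w`
(`k+1 ≥ 1` encodes the requirement that the number of `w`-vectors is at least one).
With `0`-indexing, the sign `(-1)^(i+k+1)` below is the paper's `(-1)^{i+k+1}` for
`1`-indexed `i` and `k+1` vectors. -/
noncomputable def stdControl {E : Type*} [NormedAddCommGroup E] [InnerProductSpace ℝ E]
    {k : ℕ} (w : Fin (k + 1) → E) (u : E) : E :=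
  (∑ i : Fin (k + 1),
      ((-1 : ℝ) ^ ((i : ℕ) + k + 1) *
        (sigmaMat w (Fin.snoc (w ∘ i.succAbove) u)).det) • w i) +
    (sigmaMat w w).det • u

/-- The family of gradients `(∇F₁(x),…,∇F_{k+1}(x),∇G(x))`. -/
noncomputable def gradFam {E : Type*} [NormedAddCommGroup E] [InnerProductSpace ℝ E]
    [FiniteDimensional ℝ E] {k : ℕ} (F : Fin (k + 1) → E → ℝ) (G : E → ℝ) (x : E) :
    Fin (k + 1 + 1) → E :=
  Fin.snoc (fun i => gradient (F i) x) (gradient G x)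

/-- The standard control vector field `x ↦ v₀(∇F₁(x),…,∇F_{k+1}(x),∇G(x))`. -/
noncomputable def v0Field {E : Type*} [NormedAddCommGroup E] [InnerProductSpace ℝ E]
    [FiniteDimensional ℝ E] {k : ℕ} (F : Fin (k + 1) → E → ℝ) (G : E → ℝ) (x : E) : E :=
  stdControl (fun i => gradient (F i) x) (gradient G x)

/-- `det Σ^{(∇F₁(x),…,∇F_{k+1}(x),∇G(x))}_{(∇F₁(x),…,∇F_{k+1}(x),∇G(x))}`. -/
noncomputable def gramDetFG {E : Type*} [NormedAddCommGroup E] [InnerProductSpace ℝ E]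
    [FiniteDimensional ℝ E] {k : ℕ} (F : Fin (k + 1) → E → ℝ) (G : E → ℝ) (x : E) : ℝ :=
  (sigmaMat (gradFam F G x) (gradFam F G x)).det

/-- The set `Inv = {x | det Σ^{(∇F(x),∇G(x))}_{(∇F(x),∇G(x))} = 0}`. -/
def invSet {E : Type*} [NormedAddCommGroup E] [InnerProductSpace ℝ E]
    [FiniteDimensional ℝ E] {k : ℕ} (F : Fin (k + 1) → E → ℝ) (G : E → ℝ) : Set E :=
  {x | gramDetFG F G x = 0}

/-!
Along a solution, `⟪∇G, X⟫ = 0` and `⟪∇G, v₀⟫` is the Laplace expansion, along its last column,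
of the Gram determinant of `(∇F₁, …, ∇F_k, ∇G)`. Hence `t ↦ G (x t)` has derivative
`-det Σ ≤ 0`, so it decreases to a limit that every limit point of `x` at `+∞` realises.
If that limit equals `G x₀`, then `G ∘ x` is constant on `[0, ∞)` and its derivative
`-det Σ(x₀)` at `0` vanishes.
-/

open Matrix

lemma Fin.snoc_comp_castSucc_succAbove {α : Type*} {k : ℕ} (w : Fin (k + 1) → α) (u : α)
    (i : Fin (k + 1)) :
    (Fin.snoc w u : Fin (k + 2) → α) ∘ i.castSucc.succAbove = Fin.snoc (w ∘ i.succAbove) u := by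
  funext r
  refine Fin.lastCases ?_ (fun r => ?_) r
  · have : i.castSucc.succAbove (Fin.last k) = Fin.last (k + 1) :=
      Fin.succAbove_castSucc_of_le i (Fin.last k) (Fin.le_last i)
    simp [this]
  · simp [Fin.castSucc_succAbove_castSucc]

section sigmaMat

variable {E : Type*} [NormedAddCommGroup E] [InnerProductSpace ℝ E]

lemma sigmaMat_transpose {r s : ℕ} (a : Fin r → E) (b : Fin s → E) :
    (sigmaMat a b)ᵀ = sigmaMat b a := by
  ext i j
  exact real_inner_comm _ _

lemma sigmaMat_submatrix {r s r' s' : ℕ} (a : Fin r → E) (b : Fin s → E)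
    (f : Fin r' → Fin r) (g : Fin s' → Fin s) :
    (sigmaMat a b).submatrix f g = sigmaMat (a ∘ f) (b ∘ g) :=
  rfl

lemma sigmaMat_self_eq_gram {n : ℕ} (a : Fin n → E) : sigmaMat a a = gram ℝ a := by
  ext i j
  exact real_inner_comm _ _

lemma det_sigmaMat_self_nonneg {n : ℕ} (a : Fin n → E) : 0 ≤ (sigmaMat a a).det :=
  sigmaMat_self_eq_gram a ▸ (posSemidef_gram ℝ a).det_nonneg

lemma inner_stdControl {k : ℕ} (w : Fin (k + 1) → E) (u : E) :
    ⟪u, stdControl w u⟫ = (sigmaMat (Fin.snoc w u) (Fin.snoc w u)).det := by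
  have hw : (Fin.snoc w u : Fin (k + 2) → E) ∘ (Fin.last (k + 1)).succAbove = w := by
    rw [Fin.succAbove_last]
    exact Fin.snoc_comp_castSucc
  rw [det_succ_column _ (Fin.last (k + 1)), Fin.sum_univ_castSucc, stdControl, inner_add_right,
    inner_sum]
  simp only [sigmaMat_submatrix, hw, Fin.snoc_comp_castSucc_succAbove, real_inner_smul_right]
  congr 1
  · refine Finset.sum_congr rfl fun i _ => ?_
    rw [← sigmaMat_transpose w, det_transpose]
    simp only [sigmaMat, of_apply, Fin.snoc_last, Fin.snoc_castSucc, Fin.val_castSucc, Fin.val_last]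
    ring
  · simp only [sigmaMat, of_apply, Fin.snoc_last, Fin.val_last, ← two_mul, pow_mul, neg_one_sq,
      one_pow]
    ring

end sigmaMat

lemma HasGradientAt.comp_hasDerivAt {E : Type*} [NormedAddCommGroup E] [InnerProductSpace ℝ E]
    [CompleteSpace E] {G : E → ℝ} {g' : E} {x : ℝ → E} {x' : E} {r : ℝ}
    (hG : HasGradientAt G g' (x r)) (hx : HasDerivAt x x' r) :
    HasDerivAt (fun u => G (x u)) ⟪g', x'⟫ r := by
  have h := hG.hasFDerivAt.comp_hasDerivAt r hx
  rwa [InnerProductSpace.toDual_apply_apply] at h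

lemma HasDerivAt.eq_zero_of_eqOn_Ici {F : Type*} [NormedAddCommGroup F] [NormedSpace ℝ F]
    {g : ℝ → F} {g' : F} {r : ℝ} (h : HasDerivAt g g' r)
    (hc : Set.EqOn g (fun _ => g r) (Set.Ici r)) : g' = 0 :=
  (uniqueDiffOn_Ici r r Set.self_mem_Ici).eq_deriv _ h.hasDerivWithinAt
    ((hasDerivWithinAt_const r _ (g r)).congr hc rfl)

lemma Antitone.le_of_tendsto_comp_atTop {α β : Type*} [Preorder α] [Preorder β]
    [TopologicalSpace β] [ClosedIicTopology β] {g : α → β} (hg : Antitone g) {t : ℕ → α}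
    (ht : Tendsto t atTop atTop) {L : β} (hL : Tendsto (fun n => g (t n)) atTop (𝓝 L)) (r : α) :
    L ≤ g r :=
  _root_.le_of_tendsto hL <| (ht.eventually_ge_atTop r).mono fun _ hn => hg hn

lemma hasDerivAt_comp_solution {E : Type*} [NormedAddCommGroup E] [InnerProductSpace ℝ E]
    [FiniteDimensional ℝ E] {k : ℕ} (F : Fin (k + 1) → E → ℝ) {G : E → ℝ} {X : E → E}
    {x : ℝ → E} {r : ℝ} (hG : DifferentiableAt ℝ G (x r))
    (hcons : ⟪gradient G (x r), X (x r)⟫ = 0) (hx : HasDerivAt x (X (x r) - v0Field F G (x r)) r) :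
    HasDerivAt (fun u => G (x u)) (-gramDetFG F G (x r)) r := by
  have hv : ⟪gradient G (x r), v0Field F G (x r)⟫ = gramDetFG F G (x r) :=
    inner_stdControl _ _
  simpa [inner_sub_right, hcons, hv] using hG.hasGradientAt.comp_hasDerivAt hx

theorem G_eq_on_omega_limits_general
    {E : Type*} [NormedAddCommGroup E] [InnerProductSpace ℝ E]
    [FiniteDimensional ℝ E] {k : ℕ} (F : Fin (k + 1) → E → ℝ) (G : E → ℝ) (X : E → E)
    (hG : ContDiff ℝ 1 G)
    (hcons : ∀ y : E, ⟪gradient G y, X y⟫ = 0)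
    (x : ℝ → E) (hx : ∀ t : ℝ, HasDerivAt x (X (x t) - v0Field F G (x t)) t)
    (x₀ : E) (hx₀ : x 0 = x₀) (a b : E) (t s : ℕ → ℝ)
    (ht : Tendsto t atTop atTop) (hs : Tendsto s atTop atTop)
    (hta : Tendsto (fun n => x (t n)) atTop (𝓝 a))
    (hsb : Tendsto (fun n => x (s n)) atTop (𝓝 b)) :
    G a = G b ∧ G a ≤ G x₀ ∧ (G a = G x₀ → x₀ ∈ invSet F G) := by
  have hGx : ∀ r, HasDerivAt (fun u => G (x u)) (-gramDetFG F G (x r)) r := fun r =>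
    hasDerivAt_comp_solution F ((hG.differentiable one_ne_zero) _) (hcons _) (hx r)
  have hanti : Antitone fun u => G (x u) :=
    antitone_of_hasDerivAt_nonpos hGx fun r => neg_nonpos.2 (det_sigmaMat_self_nonneg _)
  have hGa := (hG.continuous.tendsto a).comp hta
  have hGb := (hG.continuous.tendsto b).comp hsb
  have ha_le := hanti.le_of_tendsto_comp_atTop ht hGa
  have hb_le := hanti.le_of_tendsto_comp_atTop hs hGb
  have hab : G a = G b :=
    le_antisymm (ge_of_tendsto' hGb fun n => ha_le (s n)) (ge_of_tendsto' hGa fun n => hb_le (t n))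
  refine ⟨hab, hx₀ ▸ ha_le 0, fun ha₀ => ?_⟩
  have hconst : Set.EqOn (fun u => G (x u)) (fun _ => G (x 0)) (Set.Ici 0) := fun r hr =>
    le_antisymm (hanti hr) (hx₀ ▸ ha₀ ▸ ha_le r)
  simpa [invSet, hx₀] using (hGx 0).eq_zero_of_eqOn_Ici hconst

/-- Theorem 3.2 (i): if `a` and `b` are limits of a solution of the
geometrically dissipated system along two sequences of times tending to `+∞`, then
`G a = G b ≤ G x₀`, and `G a = G x₀` implies `x₀ ∈ Inv`. -/
theorem G_eq_on_omega_limits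
    {E : Type*} [NormedAddCommGroup E] [InnerProductSpace ℝ E]
    [FiniteDimensional ℝ E] {k : ℕ} (F : Fin (k + 1) → E → ℝ) (G : E → ℝ) (X : E → E)
    (hF : ∀ i, ContDiff ℝ 1 (F i)) (hG : ContDiff ℝ 1 G)
    (hcons : ∀ y : E, ⟪gradient G y, X y⟫ = 0)
    (x : ℝ → E) (hx : ∀ t : ℝ, HasDerivAt x (X (x t) - v0Field F G (x t)) t)
    (x₀ : E) (hx₀ : x 0 = x₀) (a b : E) (t s : ℕ → ℝ)
    (ht : Tendsto t atTop atTop) (hs : Tendsto s atTop atTop)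
    (hta : Tendsto (fun n => x (t n)) atTop (𝓝 a))
    (hsb : Tendsto (fun n => x (s n)) atTop (𝓝 b)) :
    G a = G b ∧ G a ≤ G x₀ ∧ (G a = G x₀ → x₀ ∈ invSet F G) :=
  G_eq_on_omega_limits_general F G X hG hcons x hx x₀ hx₀ a b t s ht hs hta hsb
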